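/- arXiv:2202.00312 — 2 statements merged into one kernel-verified Lean document; each statement's English description precedes it below -/
import Mathlib

section
/- Let {A_n} be a sequence of complex matrices with A_n of size d_n × e_n, where d_n, e_n → ∞, and let f : D ⊂ R^k → C^{r×s} be measurable with 0 < μ_k(D) < ∞. If {A_n} has singular value distribution described by f and f(x) has full rank for almost every x ∈ D, then the proportion of zero singular values vanishes: lim_{n→∞} #{i : σ_i(A_n) = 0} / (d_n ∧ e_n) = 0. -/
open Matrix MeasureTheory Filter Topology

/-- The multiset of singular values of a rectangular complex matrix. -/
noncomputable def svMultiset {α β : Type*} [Fintype α] [Fintype β] [DecidableEq α]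
    [DecidableEq β] (A : Matrix α β ℂ) : Multiset ℝ :=
  if Fintype.card α ≤ Fintype.card β then
    Finset.univ.val.map fun i =>
      Real.sqrt ((Matrix.isHermitian_mul_conjTranspose_self A).eigenvalues i)
  else
    Finset.univ.val.map fun j =>
      Real.sqrt ((Matrix.isHermitian_conjTranspose_mul_self A).eigenvalues j)

open scoped Classical in
/-- The number of zero elements of a multiset of reals. -/
noncomputable def countZeros (s : Multiset ℝ) : ℕ := (s.filter fun x => x = 0).card

/-- `{A_n}_n ∼_σ f`: the sequence of `d_n × e_n` matrices `A n` has asymptotic singular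
value distribution described by the `r × s` matrix-valued function `f` on `D ⊆ ℝ^k`. -/
def HasSVDist (k r s : ℕ) (d e : ℕ → ℕ) (A : ∀ n, Matrix (Fin (d n)) (Fin (e n)) ℂ)
    (D : Set (Fin k → ℝ)) (f : (Fin k → ℝ) → Matrix (Fin r) (Fin s) ℂ) : Prop :=
  ∀ F : ℝ → ℂ, Continuous F → HasCompactSupport F →
    Tendsto (fun n => ((svMultiset (A n)).map F).sum / ((min (d n) (e n) : ℕ) : ℂ))
      atTop
      (𝓝 (((volume D).toReal : ℂ)⁻¹ *
        ∫ x in D, ((svMultiset (f x)).map F).sum / ((min r s : ℕ) : ℂ)))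

/-!
Test the distribution against the tent functions `tent m`, which equal `1` at `0`, are
nonnegative, and vanish outside `[-1/(m+1), 1/(m+1)]`. The proportion of zero singular values of
`A n` is at most the average of `tent m` over the singular values of `A n`, which tends to the
average of `tent m` over the singular values of `f`. As `f x` has full rank for a.e. `x`, its
singular values are nonzero, so these limits tend to `0` as `m → ∞` by dominated convergence.
-/

lemma tendsto_zero_of_le_norm_of_tendsto {ι κ E : Type*} [SeminormedAddCommGroup E]
    {l : Filter ι} {l' : Filter κ} [l'.NeBot] {u : ι → ℝ} {v : κ → ι → E} {w : κ → E}
    (hu : ∀ n, 0 ≤ u n) (huv : ∀ m n, u n ≤ ‖v m n‖)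
    (hv : ∀ m, Tendsto (v m) l (𝓝 (w m))) (hw : Tendsto w l' (𝓝 0)) : Tendsto u l (𝓝 0) := by
  refine tendsto_order.2 ⟨fun a ha => .of_forall fun n => ha.trans_le (hu n), fun ε hε => ?_⟩
  obtain ⟨m, hm⟩ := (hw.norm.eventually (gt_mem_nhds (by simpa using hε))).exists
  filter_upwards [(hv m).norm.eventually (gt_mem_nhds hm)] with n hn
  exact (huv m n).trans_lt hn

/-- No measurability is needed: `‖∫ g m‖ₑ ≤ ∫⁻ ‖g m‖ₑ`, and this lower integral is attained by a
measurable minorant, to which dominated convergence applies. -/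
theorem tendsto_integral_of_norm_le_of_ae_tendsto_zero {X E : Type*} [MeasurableSpace X]
    {μ : Measure X} [IsFiniteMeasure μ] [NormedAddCommGroup E] [NormedSpace ℝ E]
    {g : ℕ → X → E} {C : ℝ} (hC : ∀ m, ∀ᵐ x ∂μ, ‖g m x‖ ≤ C)
    (hlim : ∀ᵐ x ∂μ, Tendsto (fun m => g m x) atTop (𝓝 0)) :
    Tendsto (fun m => ∫ x, g m x ∂μ) atTop (𝓝 0) := by
  choose h hmeas hle heq using fun m => exists_measurable_le_lintegral_eq μ fun x => ‖g m x‖ₑ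
  have hbound : ∀ m, h m ≤ᵐ[μ] fun _ => ENNReal.ofReal C := fun m =>
    (hC m).mono fun x hx =>
      (hle m x).trans (by simpa [ofReal_norm] using ENNReal.ofReal_le_ofReal hx)
  have hh : Tendsto (fun m => ∫⁻ x, h m x ∂μ) atTop (𝓝 0) := by
    simpa using tendsto_lintegral_of_dominated_convergence _ hmeas hbound
      (by simp [lintegral_const, ENNReal.mul_eq_top]) (hlim.mono fun x hx =>
        tendsto_of_tendsto_of_tendsto_of_le_of_le tendsto_const_nhds
          (tendsto_zero_iff_enorm_tendsto_zero.1 hx) (fun _ => zero_le) fun m => hle m x)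
  refine tendsto_zero_iff_enorm_tendsto_zero.2 <|
    tendsto_of_tendsto_of_tendsto_of_le_of_le tendsto_const_nhds hh (fun _ => zero_le) fun m => ?_
  exact (enorm_integral_le_lintegral_enorm _).trans (heq m).le

def tent (m : ℕ) (t : ℝ) : ℝ := max 0 (1 - (m + 1) * |t|)

lemma tent_nonneg (m : ℕ) (t : ℝ) : 0 ≤ tent m t := le_max_left _ _

lemma tent_le_one (m : ℕ) (t : ℝ) : tent m t ≤ 1 :=
  max_le zero_le_one (sub_le_self _ (by positivity))

@[simp] lemma tent_zero (m : ℕ) : tent m 0 = 1 := by simp [tent]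

lemma tent_eq_zero_of_one_le {m : ℕ} {t : ℝ} (h : 1 ≤ (m + 1) * |t|) : tent m t = 0 :=
  max_eq_left (by linarith)

lemma continuous_tent (m : ℕ) : Continuous (tent m) := by
  unfold tent; fun_prop

lemma hasCompactSupport_tent (m : ℕ) : HasCompactSupport (tent m) := by
  refine HasCompactSupport.intro (isCompact_Icc (a := -1) (b := 1)) fun t ht => ?_
  have ht : 1 < |t| := not_le.1 fun h => ht (abs_le.1 h)
  exact tent_eq_zero_of_one_le (by nlinarith [abs_nonneg t, (m.cast_nonneg : (0 : ℝ) ≤ m)])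

lemma eventually_tent_eq_zero {t : ℝ} (ht : t ≠ 0) : ∀ᶠ m in atTop, tent m t = 0 := by
  filter_upwards [tendsto_natCast_atTop_atTop.eventually_ge_atTop |t|⁻¹] with m hm
  refine tent_eq_zero_of_one_le ?_
  calc (1 : ℝ) = |t|⁻¹ * |t| := (inv_mul_cancel₀ (abs_ne_zero.2 ht)).symm
    _ ≤ (m + 1) * |t| := by gcongr; linarith

lemma sum_map_ofReal_tent (m : ℕ) (s : Multiset ℝ) :
    (s.map fun t => (tent m t : ℂ)).sum = ((s.map (tent m)).sum : ℂ) := by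
  rw [← Complex.ofRealHom_eq_coe, map_multiset_sum, Multiset.map_map]; rfl

lemma norm_sum_map_tent_div (m : ℕ) (s : Multiset ℝ) (N : ℕ) :
    ‖(s.map fun t => (tent m t : ℂ)).sum / N‖ = (s.map (tent m)).sum / N := by
  have hnonneg : 0 ≤ (s.map (tent m)).sum := Multiset.sum_nonneg fun y hy => by
    obtain ⟨x, -, rfl⟩ := Multiset.mem_map.mp hy
    exact tent_nonneg m x
  rw [sum_map_ofReal_tent, norm_div, Complex.norm_real, Complex.norm_natCast,
    Real.norm_of_nonneg hnonneg]

lemma sum_map_tent_le_card (m : ℕ) (s : Multiset ℝ) :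
    (s.map (tent m)).sum ≤ Multiset.card s := by
  simpa using Multiset.sum_le_card_nsmul (s.map (tent m)) 1 fun y hy => by
    obtain ⟨x, -, rfl⟩ := Multiset.mem_map.mp hy
    exact tent_le_one m x

lemma eventually_sum_map_tent_eq_zero {s : Multiset ℝ} (hs : (0 : ℝ) ∉ s) :
    ∀ᶠ m in atTop, (s.map (tent m)).sum = 0 := by
  classical
  filter_upwards [(Filter.eventually_all_finset s.toFinset).2 fun t ht =>
    eventually_tent_eq_zero (ne_of_mem_of_not_mem (Multiset.mem_toFinset.1 ht) hs)] with m hm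
  exact Multiset.sum_eq_zero fun y hy => by
    obtain ⟨x, hx, rfl⟩ := Multiset.mem_map.mp hy
    exact hm x (Multiset.mem_toFinset.2 hx)

lemma countZeros_le_sum_map (s : Multiset ℝ) {G : ℝ → ℝ} (hG : ∀ t, 0 ≤ G t) (hG0 : G 0 = 1) :
    (countZeros s : ℝ) ≤ (s.map G).sum := by
  classical
  have hzeros : (countZeros s : ℝ) = ((s.filter (· = 0)).map G).sum := by
    rw [Multiset.map_congr (g := fun _ => (1 : ℝ)) rfl
        fun x hx => by rw [(Multiset.mem_filter.mp hx).2, hG0],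
      Multiset.map_const', Multiset.sum_replicate, nsmul_one, countZeros]
  have hrest : 0 ≤ ((s.filter (¬ · = 0)).map G).sum :=
    Multiset.sum_nonneg fun y hy => by
      obtain ⟨x, -, rfl⟩ := Multiset.mem_map.mp hy
      exact hG x
  calc (countZeros s : ℝ) = ((s.filter (· = 0)).map G).sum := hzeros
    _ ≤ ((s.filter (· = 0)).map G).sum + ((s.filter (¬ · = 0)).map G).sum :=
      le_add_of_nonneg_right hrest
    _ = (s.map G).sum := by rw [← Multiset.sum_add, ← Multiset.map_add, Multiset.filter_add_not]

open scoped ComplexOrder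

lemma card_svMultiset {α β : Type*} [Fintype α] [Fintype β] [DecidableEq α] [DecidableEq β]
    (A : Matrix α β ℂ) :
    Multiset.card (svMultiset A) = min (Fintype.card α) (Fintype.card β) := by
  unfold svMultiset
  split_ifs with h
  · simp [min_eq_left h]
  · simp [min_eq_right (not_le.1 h).le]

lemma Matrix.IsHermitian.eigenvalues_ne_zero_of_rank_eq {ι : Type*} [Fintype ι] [DecidableEq ι]
    {B : Matrix ι ι ℂ} (hB : B.IsHermitian) (hrank : B.rank = Fintype.card ι) (i : ι) :
    hB.eigenvalues i ≠ 0 := by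
  intro h0
  have hlt := Fintype.card_subtype_lt (p := fun j => hB.eigenvalues j ≠ 0) (x := i) (by simpa)
  rw [← hB.rank_eq_card_non_zero_eigs, hrank] at hlt
  exact lt_irrefl _ hlt

lemma zero_notMem_svMultiset_of_rank_eq {α β : Type*} [Fintype α] [Fintype β] [DecidableEq α]
    [DecidableEq β] {A : Matrix α β ℂ}
    (hA : A.rank = min (Fintype.card α) (Fintype.card β)) : (0 : ℝ) ∉ svMultiset A := by
  unfold svMultiset
  split_ifs with h
  · simp only [Multiset.mem_map, Finset.mem_val, Finset.mem_univ, true_and, not_exists]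
    intro i hi
    refine (isHermitian_mul_conjTranspose_self A).eigenvalues_ne_zero_of_rank_eq ?_ i
      ((Real.sqrt_eq_zero (eigenvalues_self_mul_conjTranspose_nonneg A i)).1 hi)
    rw [rank_self_mul_conjTranspose, hA, min_eq_left h]
  · simp only [Multiset.mem_map, Finset.mem_val, Finset.mem_univ, true_and, not_exists]
    intro i hi
    refine (isHermitian_conjTranspose_mul_self A).eigenvalues_ne_zero_of_rank_eq ?_ i
      ((Real.sqrt_eq_zero (eigenvalues_conjTranspose_mul_self_nonneg A i)).1 hi)
    rw [rank_conjTranspose_mul_self, hA, min_eq_right (not_le.1 h).le]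

theorem tendsto_integral_sum_tent_svMultiset {X α β : Type*} [MeasurableSpace X]
    {μ : Measure X} [IsFiniteMeasure μ] [Fintype α] [Fintype β] [DecidableEq α] [DecidableEq β]
    {f : X → Matrix α β ℂ} (hf : ∀ᵐ x ∂μ, (f x).rank = min (Fintype.card α) (Fintype.card β)) :
    Tendsto (fun m => ∫ x, ((svMultiset (f x)).map fun t => (tent m t : ℂ)).sum /
      (min (Fintype.card α) (Fintype.card β) : ℕ) ∂μ) atTop (𝓝 0) := by
  refine tendsto_integral_of_norm_le_of_ae_tendsto_zero (C := 1)
    (fun m => .of_forall fun x => ?_) (hf.mono fun x hx => ?_)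
  · rw [norm_sum_map_tent_div, ← card_svMultiset (f x)]
    exact div_le_one_of_le₀ (sum_map_tent_le_card m _) (Nat.cast_nonneg _)
  · refine tendsto_const_nhds.congr' ?_
    filter_upwards [eventually_sum_map_tent_eq_zero (zero_notMem_svMultiset_of_rank_eq hx)]
      with m hm
    rw [sum_map_ofReal_tent, hm, Complex.ofReal_zero, zero_div]

theorem prop_zero_sv_tendsto_zero_general (k r s : ℕ) (d e : ℕ → ℕ)
    (A : ∀ n, Matrix (Fin (d n)) (Fin (e n)) ℂ)
    (D : Set (Fin k → ℝ)) (hD1 : volume D < ⊤)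
    (f : (Fin k → ℝ) → Matrix (Fin r) (Fin s) ℂ)
    (hdist : HasSVDist k r s d e A D f)
    (hfullrank : ∀ᵐ x ∂(volume.restrict D), (f x).rank = min r s) :
    Tendsto (fun n => (countZeros (svMultiset (A n)) : ℝ) / ((min (d n) (e n) : ℕ) : ℝ))
      atTop (𝓝 0) := by
  have : IsFiniteMeasure (volume.restrict D) := isFiniteMeasure_restrict.2 hD1.ne
  have hlim := tendsto_integral_sum_tent_svMultiset (μ := volume.restrict D) (f := f)
    (by simpa only [Fintype.card_fin] using hfullrank)
  simp only [Fintype.card_fin] at hlim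
  refine tendsto_zero_of_le_norm_of_tendsto (fun n => by positivity) (fun m n => ?_)
    (fun m => hdist (fun t => (tent m t : ℂ))
      (Complex.continuous_ofReal.comp (continuous_tent m))
      ((hasCompactSupport_tent m).comp_left Complex.ofReal_zero))
    (by simpa using hlim.const_mul (((volume D).toReal : ℂ)⁻¹))
  rw [norm_sum_map_tent_div]
  gcongr
  exact countZeros_le_sum_map _ (tent_nonneg m) (tent_zero m)

/-- If `{A_n}_n ∼_σ f` and `f` has full rank a.e. on `D`, then the proportion of zero
singular values of `A_n` vanishes as `n → ∞`. -/
theorem prop_zero_sv_tendsto_zero (k r s : ℕ) (d e : ℕ → ℕ)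
    (hd : Tendsto d atTop atTop) (he : Tendsto e atTop atTop)
    (A : ∀ n, Matrix (Fin (d n)) (Fin (e n)) ℂ)
    (D : Set (Fin k → ℝ)) (hD0 : 0 < volume D) (hD1 : volume D < ⊤)
    (f : (Fin k → ℝ) → Matrix (Fin r) (Fin s) ℂ)
    (hmeas : ∀ i j, Measurable fun x => f x i j)
    (hdist : HasSVDist k r s d e A D f)
    (hfullrank : ∀ᵐ x ∂(volume.restrict D), (f x).rank = min r s) :
    Tendsto (fun n => (countZeros (svMultiset (A n)) : ℝ) / ((min (d n) (e n) : ℕ) : ℝ))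
      atTop (𝓝 0) :=
  prop_zero_sv_tendsto_zero_general k r s d e A D hD1 f hdist hfullrank
end

section
/- Let A_{n,ij} (i = 1,...,ρ, j = 1,...,ς) be d-level (r_i,s_j)-block matrices A_{n,ij} = [a^{(n)}_{ij;IJ}]_{I,J=1}^{n} with a^{(n)}_{ij;IJ} ∈ C^{r_i×s_j}, let B_n = [A_{n,ij}]_{i,j} be the ρ×ς block matrix of these matrices, and let A_n = [[a^{(n)}_{ij;IJ}]_{i,j}]_{I,J=1}^{n} be the matrix with blocks interleaved at the level of (I,J)-entries. Then (P_{r,N} diag_{i} P_{r_i,N}^T) B_n (P_{s,N} diag_{j} P_{s_j,N}^T)^T = A_n, where N = N(n), r = Σ r_i, s = Σ s_j, and P_{k1,k2} is the Kronecker-commutation permutation matrix. -/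
open Matrix

/-- The Kronecker-commutation permutation matrix `P_{α,β}` (rows indexed by `β × α`,
columns by `α × β`), satisfying `Y ⊗ X = P_{m1,m2} (X ⊗ Y) P_{n1,n2}ᵀ`. -/
def Pm (α β : Type*) [DecidableEq α] [DecidableEq β] : Matrix (β × α) (α × β) ℂ :=
  Matrix.of fun p q => if p.2 = q.1 ∧ p.1 = q.2 then (1 : ℂ) else 0

lemma Qapply (N ρ : ℕ) (r : Fin ρ → ℕ)
    (x : Fin N × ((i : Fin ρ) × Fin (r i))) (y : (i : Fin ρ) × (Fin N × Fin (r i))) :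
    (Pm ((i : Fin ρ) × Fin (r i)) (Fin N) *
        (Matrix.blockDiagonal' fun i => (Pm (Fin (r i)) (Fin N))ᵀ).submatrix
          (fun x : ((i : Fin ρ) × Fin (r i)) × Fin N => ⟨x.1.1, (x.1.2, x.2)⟩) id) x y
    = if y = ⟨x.2.1, (x.1, x.2.2)⟩ then 1 else 0 := by
  obtain ⟨I, i, k⟩ := x
  obtain ⟨j, J, l⟩ := y
  simp only [Matrix.mul_apply, Pm, Matrix.submatrix_apply, Matrix.of_apply, id_eq,
    Fintype.sum_prod_type, ite_and, ite_mul, zero_mul, one_mul, Finset.sum_ite_irrel,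
    Finset.sum_const_zero, Finset.sum_ite_eq, Finset.sum_ite_eq', Finset.mem_univ, if_true]
  rw [Matrix.blockDiagonal'_apply]
  rcases eq_or_ne i j with h | h
  · subst h
    split_ifs <;> simp_all <;> tauto
  · simp [h, Sigma.ext_iff, Ne.symm h]


lemma QmulL {γ : Type*} [Fintype γ] (N ρ : ℕ) (r : Fin ρ → ℕ)
    (M : Matrix ((i : Fin ρ) × (Fin N × Fin (r i))) γ ℂ) :
    (Pm ((i : Fin ρ) × Fin (r i)) (Fin N) *
        (Matrix.blockDiagonal' fun i => (Pm (Fin (r i)) (Fin N))ᵀ).submatrix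
          (fun x : ((i : Fin ρ) × Fin (r i)) × Fin N => ⟨x.1.1, (x.1.2, x.2)⟩) id) * M =
    M.submatrix (fun x : Fin N × ((i : Fin ρ) × Fin (r i)) => ⟨x.2.1, (x.1, x.2.2)⟩) id := by
  ext x y
  rw [Matrix.mul_apply]
  simp only [Qapply, ite_mul, one_mul, zero_mul, Finset.sum_ite_eq, Finset.sum_ite_eq', Finset.mem_univ,
    if_true, Matrix.submatrix_apply, id_eq]

lemma QmulR {γ : Type*} [Fintype γ] (N ρ : ℕ) (r : Fin ρ → ℕ)
    (M : Matrix γ ((i : Fin ρ) × (Fin N × Fin (r i))) ℂ) :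
    M * (Pm ((i : Fin ρ) × Fin (r i)) (Fin N) *
        (Matrix.blockDiagonal' fun i => (Pm (Fin (r i)) (Fin N))ᵀ).submatrix
          (fun x : ((i : Fin ρ) × Fin (r i)) × Fin N => ⟨x.1.1, (x.1.2, x.2)⟩) id)ᵀ =
    M.submatrix id (fun x : Fin N × ((i : Fin ρ) × Fin (r i)) => ⟨x.2.1, (x.1, x.2.2)⟩) := by
  ext x y
  rw [Matrix.mul_apply]
  simp only [Matrix.transpose_apply, Qapply, mul_ite, mul_one, mul_zero,
    Finset.sum_ite_eq, Finset.sum_ite_eq', Finset.mem_univ, if_true, Matrix.submatrix_apply, id_eq]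

/-- Interleaving identity: if `A_{n,ij} = [a_{ij;IJ}]_{I,J}` are `(r_i, s_j)`-block
matrices with `N` block rows/columns, `B_n = [A_{n,ij}]_{i,j}` is the block matrix of
these matrices, and `A_n = [[a_{ij;IJ}]_{i,j}]_{I,J}` is the matrix with the blocks
interleaved at the level of `(I,J)`-entries, then
`(P_{r,N} diag_i P_{r_i,N}ᵀ) B_n (P_{s,N} diag_j P_{s_j,N}ᵀ)ᵀ = A_n`. -/
theorem interleaving_identity (N ρ ς : ℕ) (r : Fin ρ → ℕ) (s : Fin ς → ℕ)
    (a : ∀ (i : Fin ρ) (j : Fin ς), Fin N → Fin N → Matrix (Fin (r i)) (Fin (s j)) ℂ) :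
    (Pm ((i : Fin ρ) × Fin (r i)) (Fin N) *
        (Matrix.blockDiagonal' fun i => (Pm (Fin (r i)) (Fin N))ᵀ).submatrix
          (fun x : ((i : Fin ρ) × Fin (r i)) × Fin N => ⟨x.1.1, (x.1.2, x.2)⟩) id) *
      (Matrix.of fun (x : (i : Fin ρ) × (Fin N × Fin (r i)))
          (y : (j : Fin ς) × (Fin N × Fin (s j))) =>
        a x.1 y.1 x.2.1 y.2.1 x.2.2 y.2.2) *
      (Pm ((j : Fin ς) × Fin (s j)) (Fin N) *
        (Matrix.blockDiagonal' fun j => (Pm (Fin (s j)) (Fin N))ᵀ).submatrix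
          (fun y : ((j : Fin ς) × Fin (s j)) × Fin N => ⟨y.1.1, (y.1.2, y.2)⟩) id)ᵀ =
    Matrix.of fun (x : Fin N × ((i : Fin ρ) × Fin (r i)))
        (y : Fin N × ((j : Fin ς) × Fin (s j))) =>
      a x.2.1 y.2.1 x.1 y.1 x.2.2 y.2.2 := by
  rw [QmulL, QmulR]
  rfl
end
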